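/- arXiv:math/0512077 — 5 statements merged into one kernel-verified Lean document; each statement's English description precedes it below -/
import Mathlib

section
/- If a graph H contains no complete bipartite subgraph K_{a,b}, then the order complex of the image of the closure map v(X) = Γ(Γ(X)) on the face poset of the neighborhood complex N[H] has dimension at most a+b-3. -/
/-!
Let `c 0 ⊂ ⋯ ⊂ c m` be a chain of closed faces. Picking `u i ∈ c i` not in any earlier `c j`,
and `w j ∈ Γ (c j)` not in any later `Γ (c k)` (the sets `Γ (c j)` strictly decrease because the
`c j` are closed), gives injective sequences with `u i ∼ w j` whenever `i ≤ j`. This staircase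
contains `K_{a, b}` as soon as `a + b ≤ m + 2`: take `u 0, …, u (a-1)` against
`w (a-1), …, w (a+b-2)`.
-/

def commonNbrs {V : Type*} (H : SimpleGraph V) (X : Set V) : Set V :=
  {v | ∀ x ∈ X, H.Adj v x}

open Function Finset

section commonNbrs

variable {V : Type*} (H : SimpleGraph V)

theorem commonNbrs_anti {X Y : Set V} (h : X ⊆ Y) : commonNbrs H Y ⊆ commonNbrs H X :=
  fun _ hv x hx => hv x (h hx)

theorem subset_commonNbrs_commonNbrs (X : Set V) : X ⊆ commonNbrs H (commonNbrs H X) :=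
  fun x hx _ hy => (hy x hx).symm

theorem commonNbrs_commonNbrs_commonNbrs (X : Set V) :
    commonNbrs H (commonNbrs H (commonNbrs H X)) = commonNbrs H X :=
  (commonNbrs_anti H (subset_commonNbrs_commonNbrs H X)).antisymm
    (subset_commonNbrs_commonNbrs H _)

theorem commonNbrs_ssubset_commonNbrs {X Y : Set V}
    (hX : commonNbrs H (commonNbrs H X) = X) (h : X ⊂ Y) :
    commonNbrs H Y ⊂ commonNbrs H X := by
  refine (commonNbrs_anti H h.subset).ssubset_of_ne fun heq => h.not_subset ?_
  calc Y ⊆ commonNbrs H (commonNbrs H Y) := subset_commonNbrs_commonNbrs H Y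
    _ = X := by rw [heq, hX]

end commonNbrs

theorem exists_injective_mem_of_strictMono {α : Type*} {n : ℕ} {c : Fin (n + 1) → Set α}
    (hc : StrictMono c) (h0 : (c 0).Nonempty) :
    ∃ x : Fin (n + 1) → α, Injective x ∧ ∀ i, x i ∈ c i := by
  have hnew : ∀ i, ∃ x ∈ c i, ∀ j < i, x ∉ c j := by
    intro i
    induction i using Fin.cases with
    | zero => exact h0.imp fun x hx => ⟨hx, fun j hj => absurd hj (Fin.not_lt_zero j)⟩
    | succ k =>
      obtain ⟨x, hx, hxk⟩ := Set.exists_of_ssubset (hc (Fin.castSucc_lt_succ (i := k)))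
      exact ⟨x, hx, fun j hj hxj => hxk (hc.monotone (Fin.le_castSucc_iff.mpr hj) hxj)⟩
  choose x hmem hnot using hnew
  exact ⟨x, .of_lt_imp_ne fun i j hij hx => hnot j i hij (hx ▸ hmem i), hmem⟩

theorem exists_staircase_of_strictMono {V : Type*} (H : SimpleGraph V) {m : ℕ}
    {c : Fin (m + 1) → Set V} (hc : StrictMono c)
    (hclosed : ∀ i, commonNbrs H (commonNbrs H (c i)) = c i)
    (h0 : (c 0).Nonempty) (hlast : (commonNbrs H (c (Fin.last m))).Nonempty) :
    ∃ u w : Fin (m + 1) → V, Injective u ∧ Injective w ∧ ∀ i j, i ≤ j → H.Adj (u i) (w j) := by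
  obtain ⟨u, hu, hmem_u⟩ := exists_injective_mem_of_strictMono hc h0
  have hdual : StrictMono fun k : Fin (m + 1) => commonNbrs H (c k.rev) := fun k l hkl =>
    commonNbrs_ssubset_commonNbrs H (hclosed _) (hc (Fin.rev_lt_rev.mpr hkl))
  obtain ⟨y, hy, hmem_y⟩ :=
    exists_injective_mem_of_strictMono hdual (by simpa only [Fin.rev_zero] using hlast)
  refine ⟨u, y ∘ Fin.rev, hu, hy.comp Fin.rev_injective, fun i j hij => ?_⟩
  have hw : y j.rev ∈ commonNbrs H (c j) := by simpa only [Fin.rev_rev] using hmem_y j.rev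
  exact (hw (u i) (hc.monotone hij (hmem_u i))).symm

def HasCompleteBipartite {V : Type*} (H : SimpleGraph V) (a b : ℕ) : Prop :=
  ∃ U W : Finset V, Disjoint U W ∧ #U = a ∧ #W = b ∧ ∀ u ∈ U, ∀ w ∈ W, H.Adj u w

namespace HasCompleteBipartite

variable {V : Type*} {H : SimpleGraph V} {a b : ℕ}

theorem symm (h : HasCompleteBipartite H a b) : HasCompleteBipartite H b a :=
  let ⟨U, W, hdisj, hU, hW, hadj⟩ := h
  ⟨W, U, hdisj.symm, hW, hU, fun w hw u hu => (hadj u hu w hw).symm⟩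

theorem mono {a' b' : ℕ} (h : HasCompleteBipartite H a b) (ha : a' ≤ a) (hb : b' ≤ b) :
    HasCompleteBipartite H a' b' := by
  obtain ⟨U, W, hdisj, rfl, rfl, hadj⟩ := h
  obtain ⟨U', hU', rfl⟩ := exists_subset_card_eq ha
  obtain ⟨W', hW', rfl⟩ := exists_subset_card_eq hb
  exact ⟨U', W', hdisj.mono hU' hW', rfl, rfl, fun u hu w hw => hadj u (hU' hu) w (hW' hw)⟩

theorem zero_left (h : HasCompleteBipartite H a b) : HasCompleteBipartite H 0 (a + b) := by
  classical
  obtain ⟨U, W, hdisj, hU, hW, -⟩ := h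
  exact ⟨∅, U ∪ W, disjoint_empty_left _, card_empty, by rw [card_union_of_disjoint hdisj, hU, hW],
    fun _ hu => absurd hu (notMem_empty _)⟩

end HasCompleteBipartite

section staircase

variable {V : Type*} {H : SimpleGraph V} {m : ℕ} {u w : Fin (m + 1) → V}

theorem hasCompleteBipartite_of_staircase_of_pos (hu : Injective u) (hw : Injective w)
    (hadj : ∀ i j, i ≤ j → H.Adj (u i) (w j)) {a b : ℕ} (ha : 0 < a) (hb : 0 < b)
    (hab : a + b ≤ m + 2) : HasCompleteBipartite H a b := by
  let f : Fin a → Fin (m + 1) := fun i => ⟨i, by omega⟩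
  let g : Fin b → Fin (m + 1) := fun k => ⟨a - 1 + k, by omega⟩
  have hf : Injective f := fun i j h => Fin.ext (by simpa [f] using h)
  have hg : Injective g := fun k l h => Fin.ext (by simpa [g] using h)
  have hfg : ∀ i k, f i ≤ g k := fun i k => Fin.mk_le_mk.mpr (by omega)
  refine ⟨univ.map ⟨u ∘ f, hu.comp hf⟩, univ.map ⟨w ∘ g, hw.comp hg⟩, ?_, by simp, by simp, ?_⟩
  · simp only [disjoint_left, mem_map, mem_univ, true_and]
    rintro _ ⟨i, rfl⟩ ⟨k, hk⟩
    exact (hadj _ _ (hfg i k)).ne hk.symm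
  · simp only [mem_map, mem_univ, true_and]
    rintro _ ⟨i, rfl⟩ _ ⟨k, rfl⟩
    exact hadj _ _ (hfg i k)

/-- When `a = 0` or `b = 0`, the `m + 2` vertices of `K_{1, m+1}` serve instead. -/
theorem hasCompleteBipartite_of_staircase (hu : Injective u) (hw : Injective w)
    (hadj : ∀ i j, i ≤ j → H.Adj (u i) (w j)) {a b : ℕ} (hab : a + b ≤ m + 2) :
    HasCompleteBipartite H a b := by
  have hmax := (hasCompleteBipartite_of_staircase_of_pos hu hw hadj one_pos
    (Nat.succ_pos m) (by omega)).zero_left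
  rcases Nat.eq_zero_or_pos a with rfl | ha
  · exact hmax.mono le_rfl (by omega)
  rcases Nat.eq_zero_or_pos b with rfl | hb
  · exact hmax.symm.mono (by omega) le_rfl
  exact hasCompleteBipartite_of_staircase_of_pos hu hw hadj ha hb hab

end staircase

/-- If `H` contains no complete bipartite subgraph `K_{a,b}`, then any strictly increasing
chain `c : Fin (m+1) → Set V` of faces of the neighborhood complex lying in the image of the
closure map `v(X) = Γ(Γ(X))` has `m ≤ a + b - 3`; i.e. the order complex of the image of `v`
on the face poset of `N[H]` has dimension at most `a + b - 3`. -/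
theorem dim_order_complex_le {V : Type*} (H : SimpleGraph V) (a b : ℕ)
    (hbip : ¬ ∃ (U W : Finset V), Disjoint U W ∧ U.card = a ∧ W.card = b ∧
      ∀ u ∈ U, ∀ w ∈ W, H.Adj u w)
    (m : ℕ) (c : Fin (m + 1) → Set V)
    (hface : ∀ i, (c i).Nonempty ∧ (commonNbrs H (c i)).Nonempty)
    (himage : ∀ i, ∃ X : Set V, X.Nonempty ∧ (commonNbrs H X).Nonempty ∧
      c i = commonNbrs H (commonNbrs H X))
    (hchain : StrictMono c) :
    (m : ℤ) ≤ (a : ℤ) + b - 3 := by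
  have hclosed : ∀ i, commonNbrs H (commonNbrs H (c i)) = c i := fun i => by
    obtain ⟨X, -, -, hX⟩ := himage i
    rw [hX, commonNbrs_commonNbrs_commonNbrs]
  obtain ⟨u, w, hu, hw, hadj⟩ := exists_staircase_of_strictMono H hchain hclosed
    (hface 0).1 (hface (Fin.last m)).2
  by_contra! hlt
  exact hbip (hasCompleteBipartite_of_staircase hu hw hadj (by omega))
end

section
/- If a simplicial complex on at least i+1 vertices is i-neighborly (every set of i vertices spans a face), then it is (i-2)-connected. -/
/-- The geometric realization of an abstract simplicial complex `K` on a finite vertex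
set `V`: convex combinations of vertices whose support is contained in a face. -/
def realization {V : Type*} [Fintype V] (K : Finset V → Prop) : Set (V → ℝ) :=
  {f | (∀ v, 0 ≤ f v) ∧ (∑ v, f v) = 1 ∧ ∃ S : Finset V, K S ∧ ∀ v ∉ S, f v = 0}

/-- A topological space `X` is `k`-connected if for every `0 ≤ n ≤ k`, every continuous map
from the `n`-sphere to `X` extends to the `(n+1)`-ball. -/
def IsKConnected (X : Type*) [TopologicalSpace X] (k : ℤ) : Prop :=
  ∀ n : ℕ, (n : ℤ) ≤ k →
    ∀ f : C(Metric.sphere (0 : EuclideanSpace ℝ (Fin (n + 1))) 1, X),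
      ∃ g : C(Metric.closedBall (0 : EuclideanSpace ℝ (Fin (n + 1))) 1, X),
        ∀ x (hx : x ∈ Metric.sphere (0 : EuclideanSpace ℝ (Fin (n + 1))) 1),
          g ⟨x, Metric.sphere_subset_closedBall hx⟩ = f ⟨x, hx⟩

/-!
Cover the sphere `Sⁿ` by the open stars `{p | 0 < f p u}` of the vertices `u`. Rescale the
Freudenthal triangulation of `ℝⁿ⁺¹` below a Lebesgue number of this cover and send each lattice
point `v` to a vertex whose star contains every point of the sphere near `v`. The resulting
piecewise linear map `φ` takes the ball into the simplex on `V`, with at most `n + 2 ≤ i` nonzero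
coordinates at every point, hence into the realization by `i`-neighborliness. On the sphere the
support of `φ p` lies inside the support of `f p`, so the segment from `φ p` to `f p` stays in one
face; following these segments across a collar glues `φ` and `f` into an extension of `f`.
-/

open Finset Metric Topology

section FoldMax

variable {ι : Type*}

theorem le_fold_max_of_mem {α : Type*} [LinearOrder α] {s : Finset ι} (b : α) {f : ι → α}
    {j : ι} (hj : j ∈ s) : f j ≤ s.fold max b f :=
  (le_fold_max _).2 (Or.inr ⟨j, hj, le_rfl⟩)

theorem fold_max_eq_of_forall_le {s : Finset ι} {u : ι → ℝ} {j₀ : ι} (hj₀ : j₀ ∈ s)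
    (hmax : ∀ j ∈ s, u j ≤ u j₀) (h₀ : 0 ≤ u j₀) : s.fold max 0 u = u j₀ :=
  le_antisymm ((fold_max_le _).2 ⟨h₀, hmax⟩) (le_fold_max_of_mem 0 hj₀)

theorem continuous_fold_max {X : Type*} [TopologicalSpace X] (s : Finset ι) {g : ι → X → ℝ}
    (hg : ∀ j, Continuous (g j)) : Continuous fun x => s.fold max 0 (fun j => g j x) := by
  classical
  induction s using Finset.induction_on with
  | empty => exact continuous_const
  | insert a s ha ih => simpa only [fold_insert ha] using (hg a).max ih

theorem fold_max_eq_of_nonpos {s t : Finset ι} {g h : ι → ℝ} (hts : t ⊆ s)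
    (hg : ∀ j ∈ s, j ∉ t → g j ≤ 0) (hgh : ∀ j ∈ t, g j = h j) :
    s.fold max 0 g = t.fold max 0 h := by
  have hs₀ : 0 ≤ s.fold max 0 g := (le_fold_max _).2 (Or.inl le_rfl)
  have ht₀ : 0 ≤ t.fold max 0 h := (le_fold_max _).2 (Or.inl le_rfl)
  refine le_antisymm ((fold_max_le _).2 ⟨ht₀, fun j hj => ?_⟩)
    ((fold_max_le _).2 ⟨hs₀, fun j hj => ?_⟩)
  · by_cases hjt : j ∈ t
    · exact (hgh j hjt).trans_le (le_fold_max_of_mem 0 hjt)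
    · exact (hg j hj hjt).trans ht₀
  · exact (hgh j hj).symm.trans_le (le_fold_max_of_mem 0 (hts hj))

end FoldMax

theorem card_le_card_add_one_of_isChain {ι : Type*} {s : Finset ι} {𝒜 : Finset (Finset ι)}
    (h𝒜 : IsChain (· ⊆ ·) (𝒜 : Set (Finset ι))) (hs : ∀ A ∈ 𝒜, A ⊆ s) : #𝒜 ≤ #s + 1 := by
  have hmaps : Set.MapsTo card (𝒜 : Set (Finset ι)) (range (#s + 1) : Set ℕ) := fun A hA =>
    mem_range.2 (Nat.lt_succ_of_le (card_le_card (hs A hA)))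
  refine (card_le_card_of_injOn card hmaps fun A hA B hB hAB => ?_).trans (card_range _).le
  rcases h𝒜.total hA hB with h | h
  · exact eq_of_subset_of_card_le h hAB.ge
  · exact (eq_of_subset_of_card_le h hAB.le).symm

section KuhnWeight

variable {ι : Type*} [DecidableEq ι]

/-- For `u ∈ [0,1]^s` this is the length of the set of thresholds `t ∈ [0,1)` with
`{j ∈ s | t < u j} = A`, so these weights sum to `1` over `A ⊆ s`. -/
noncomputable def kuhnWeight (s A : Finset ι) (u : ι → ℝ) : ℝ :=
  max 0 (1 - (s \ A).fold max 0 u - A.fold max 0 (fun j => 1 - u j))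

theorem kuhnWeight_add_kuhnWeight_insert {s A : Finset ι} {u : ι → ℝ} {j₀ : ι} (hj₀ : j₀ ∈ s)
    (hmax : ∀ j ∈ s, u j ≤ u j₀) (h₀ : 0 ≤ u j₀) (h₁ : u j₀ ≤ 1) (hA : A ⊆ s.erase j₀) :
    kuhnWeight s A u + kuhnWeight s (insert j₀ A) u = kuhnWeight (s.erase j₀) A u := by
  have hj₀A : j₀ ∉ A := fun h => (notMem_erase j₀ s) (hA h)
  have hsdiff : s \ insert j₀ A = s.erase j₀ \ A := by
    rw [sdiff_insert, erase_sdiff_comm]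
  rcases A.eq_empty_or_nonempty with rfl | ⟨j₁, hj₁⟩
  · have hrest : (s.erase j₀).fold max 0 u ≤ u j₀ :=
      (fold_max_le _).2 ⟨h₀, fun j hj => hmax j (mem_of_mem_erase hj)⟩
    simp only [kuhnWeight, sdiff_empty, insert_empty, fold_empty, fold_singleton,
      sdiff_singleton_eq_erase, fold_max_eq_of_forall_le hj₀ hmax h₀, sub_zero]
    rw [max_eq_left (sub_nonneg.2 h₁), max_eq_right (sub_nonneg.2 h₁), max_eq_right (by linarith),
      max_eq_right (by linarith)]
    ring
  · have hj₁s : j₁ ∈ s := mem_of_mem_erase (hA hj₁)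
    have hle : 1 - u j₁ ≤ A.fold max 0 (fun j => 1 - u j) :=
      le_fold_max_of_mem 0 hj₁ (f := fun j => 1 - u j)
    have hvanish : kuhnWeight s A u = 0 := by
      have : u j₀ ≤ (s \ A).fold max 0 u := le_fold_max_of_mem 0 (mem_sdiff.2 ⟨hj₀, hj₀A⟩)
      exact max_eq_left (by linarith [hmax j₁ hj₁s])
    rw [hvanish, zero_add, kuhnWeight, kuhnWeight, hsdiff, fold_insert hj₀A,
      max_eq_right (a := 1 - u j₀) (by linarith [hmax j₁ hj₁s])]

theorem sum_kuhnWeight_powerset (s : Finset ι) {u : ι → ℝ} (h₀ : ∀ j ∈ s, 0 ≤ u j)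
    (h₁ : ∀ j ∈ s, u j ≤ 1) : ∑ A ∈ s.powerset, kuhnWeight s A u = 1 := by
  induction s using Finset.strongInduction with
  | H s ih =>
    rcases s.eq_empty_or_nonempty with rfl | hs
    · simp [kuhnWeight]
    obtain ⟨j₀, hj₀, hmax⟩ := exists_max_image s u hs
    have hj₀' : j₀ ∉ s.erase j₀ := notMem_erase j₀ s
    calc ∑ A ∈ s.powerset, kuhnWeight s A u
        = ∑ A ∈ (s.erase j₀).powerset,
            (kuhnWeight s A u + kuhnWeight s (insert j₀ A) u) := by
          rw [sum_add_distrib, ← sum_powerset_insert hj₀', insert_erase hj₀]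
      _ = ∑ A ∈ (s.erase j₀).powerset, kuhnWeight (s.erase j₀) A u :=
          sum_congr rfl fun A hA => kuhnWeight_add_kuhnWeight_insert hj₀ hmax (h₀ j₀ hj₀)
            (h₁ j₀ hj₀) (mem_powerset.1 hA)
      _ = 1 := ih _ (erase_ssubset hj₀) (fun j hj => h₀ j (mem_of_mem_erase hj))
          (fun j hj => h₁ j (mem_of_mem_erase hj))

theorem subset_or_subset_of_kuhnWeight_ne_zero {s A B : Finset ι} {u : ι → ℝ} (hA : A ⊆ s)
    (hB : B ⊆ s) (hwA : kuhnWeight s A u ≠ 0) (hwB : kuhnWeight s B u ≠ 0) : A ⊆ B ∨ B ⊆ A := by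
  have key : ∀ {A}, kuhnWeight s A u ≠ 0 → ∀ j ∈ A, ∀ k ∈ s \ A, u k < u j := by
    intro A hw j hj k hk
    have hpos : 0 < 1 - (s \ A).fold max 0 u - A.fold max 0 (fun j => 1 - u j) :=
      lt_of_not_ge fun h => hw (max_eq_left h)
    linarith [le_fold_max_of_mem 0 hk (f := u), le_fold_max_of_mem 0 hj (f := fun j => 1 - u j)]
  by_contra! h
  obtain ⟨j, hjA, hjB⟩ := not_subset.1 h.1
  obtain ⟨k, hkB, hkA⟩ := not_subset.1 h.2
  exact lt_asymm (key hwA j hjA k (mem_sdiff.2 ⟨hB hkB, hkA⟩))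
    (key hwB k hkB j (mem_sdiff.2 ⟨hA hjA, hjB⟩))

end KuhnWeight

section FreudenthalHat

variable {ι : Type*} [Fintype ι]

/-- The barycentric coordinate of `y` at the vertex `v` of the Freudenthal triangulation of `ℝ^ι`,
whose simplices are `{y | 1 ≥ y σ₁ - w σ₁ ≥ ⋯ ≥ y σₙ - w σₙ ≥ 0}` for `w ∈ ℤ^ι` and
permutations `σ`. -/
noncomputable def freudenthalHat (y : ι → ℝ) (v : ι → ℤ) : ℝ :=
  max 0 (1 - univ.fold max 0 (fun j => y j - v j) - univ.fold max 0 (fun j => (v j : ℝ) - y j))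

theorem freudenthalHat_nonneg (y : ι → ℝ) (v : ι → ℤ) : 0 ≤ freudenthalHat y v :=
  le_max_left _ _

theorem continuous_freudenthalHat (v : ι → ℤ) : Continuous fun y => freudenthalHat y v :=
  continuous_const.max <| (continuous_const.sub <| continuous_fold_max _ fun j =>
    (continuous_apply j).sub continuous_const).sub <| continuous_fold_max _ fun j =>
      continuous_const.sub (continuous_apply j)

theorem abs_sub_lt_one_of_freudenthalHat_ne_zero {y : ι → ℝ} {v : ι → ℤ}
    (h : freudenthalHat y v ≠ 0) (j : ι) : |y j - v j| < 1 := by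
  have hpos : 0 < 1 - univ.fold max 0 (fun j => y j - v j) -
      univ.fold max 0 (fun j => (v j : ℝ) - y j) :=
    lt_of_not_ge fun h' => h (max_eq_left h')
  have h₁ := le_fold_max_of_mem 0 (mem_univ j) (f := fun j => y j - v j)
  have h₂ := le_fold_max_of_mem 0 (mem_univ j) (f := fun j => (v j : ℝ) - y j)
  have h₃ : (0 : ℝ) ≤ univ.fold max 0 (fun j => y j - v j) := (le_fold_max _).2 (Or.inl le_rfl)
  have h₄ : (0 : ℝ) ≤ univ.fold max 0 (fun j => (v j : ℝ) - y j) :=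
    (le_fold_max _).2 (Or.inl le_rfl)
  rw [abs_lt]
  constructor <;> linarith

end FreudenthalHat

section LatticeCorner

variable {ι : Type*} [DecidableEq ι]

noncomputable def latticeCorner (y : ι → ℝ) (A : Finset ι) : ι → ℤ :=
  fun j => ⌊y j⌋ + if j ∈ A then 1 else 0

theorem latticeCorner_injective (y : ι → ℝ) : Function.Injective (latticeCorner y) := by
  intro A B h
  ext j
  have := congr_fun h j
  by_cases hA : j ∈ A <;> by_cases hB : j ∈ B <;> simp_all [latticeCorner]

variable [Fintype ι]

theorem exists_latticeCorner_eq_of_freudenthalHat_ne_zero {y : ι → ℝ} {v : ι → ℤ}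
    (h : freudenthalHat y v ≠ 0) : ∃ A, latticeCorner y A = v := by
  refine ⟨univ.filter fun j => v j ≠ ⌊y j⌋, funext fun j => ?_⟩
  have hj := abs_lt.1 (abs_sub_lt_one_of_freudenthalHat_ne_zero h j)
  rcases le_or_gt (v j : ℝ) (y j) with hle | hlt
  · have : ⌊y j⌋ = v j := Int.floor_eq_iff.2 ⟨hle, by linarith⟩
    simp [latticeCorner, this]
  · have : ⌊y j⌋ = v j - 1 := Int.floor_eq_iff.2 ⟨by push_cast; linarith, by push_cast; linarith⟩
    simp [latticeCorner, this, show v j ≠ v j - 1 by omega]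

theorem freudenthalHat_latticeCorner (y : ι → ℝ) (A : Finset ι) :
    freudenthalHat y (latticeCorner y A) = kuhnWeight univ A (fun j => Int.fract (y j)) := by
  have hfloor : ∀ j, y j = ⌊y j⌋ + Int.fract (y j) := fun j => (Int.floor_add_fract (y j)).symm
  have hup : univ.fold max 0 (fun j => y j - (latticeCorner y A j : ℝ)) =
      (univ \ A).fold max 0 (fun j => Int.fract (y j)) := by
    refine fold_max_eq_of_nonpos sdiff_subset (fun j _ hj => ?_) (fun j hj => ?_)
    · have hjA : j ∈ A := by simpa using hj
      simp only [latticeCorner, hjA, if_true]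
      push_cast
      linarith [hfloor j, Int.fract_lt_one (y j)]
    · have hjA : j ∉ A := (mem_sdiff.1 hj).2
      simp only [latticeCorner, hjA, if_false]
      push_cast
      linarith [hfloor j]
  have hdown : univ.fold max 0 (fun j => (latticeCorner y A j : ℝ) - y j) =
      A.fold max 0 (fun j => 1 - Int.fract (y j)) := by
    refine fold_max_eq_of_nonpos (subset_univ A) (fun j _ hj => ?_) (fun j hj => ?_)
    · simp only [latticeCorner, hj, if_false]
      push_cast
      linarith [hfloor j, Int.fract_nonneg (y j)]
    · simp only [latticeCorner, hj, if_true]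
      push_cast
      linarith [hfloor j]
  rw [freudenthalHat, kuhnWeight, hup, hdown]

theorem finsum_freudenthalHat (y : ι → ℝ) : ∑ᶠ v, freudenthalHat y v = 1 := by
  have hsupp : Function.support (freudenthalHat y) ⊆ univ.powerset.image (latticeCorner y) := by
    intro v hv
    obtain ⟨A, rfl⟩ := exists_latticeCorner_eq_of_freudenthalHat_ne_zero hv
    simp
  rw [finsum_eq_sum_of_support_subset _ hsupp,
    sum_image fun A _ B _ h => latticeCorner_injective y h]
  simp_rw [freudenthalHat_latticeCorner]
  exact sum_kuhnWeight_powerset univ (fun j _ => Int.fract_nonneg _)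
    (fun j _ => (Int.fract_lt_one _).le)

theorem card_filter_freudenthalHat_ne_zero_le (y : ι → ℝ) (T : Finset (ι → ℤ)) :
    #{v ∈ T | freudenthalHat y v ≠ 0} ≤ Fintype.card ι + 1 := by
  set u : ι → ℝ := fun j => Int.fract (y j)
  let 𝒜 : Finset (Finset ι) := {A | kuhnWeight univ A u ≠ 0}
  have hchain : IsChain (· ⊆ ·) (𝒜 : Set (Finset ι)) := fun A hA B hB _ =>
    subset_or_subset_of_kuhnWeight_ne_zero (subset_univ A) (subset_univ B)
      (mem_filter.1 hA).2 (mem_filter.1 hB).2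
  have himage : {v ∈ T | freudenthalHat y v ≠ 0} ⊆ 𝒜.image (latticeCorner y) := by
    intro v hv
    have hv := (mem_filter.1 hv).2
    obtain ⟨A, rfl⟩ := exists_latticeCorner_eq_of_freudenthalHat_ne_zero hv
    rw [freudenthalHat_latticeCorner] at hv
    exact mem_image_of_mem _ (mem_filter.2 ⟨mem_univ A, hv⟩)
  calc #{v ∈ T | freudenthalHat y v ≠ 0} ≤ #𝒜 := (card_le_card himage).trans card_image_le
    _ ≤ #(univ : Finset ι) + 1 := card_le_card_add_one_of_isChain hchain fun A _ => subset_univ A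
    _ = Fintype.card ι + 1 := by rw [card_univ]

end LatticeCorner

theorem EuclideanSpace.norm_le_sum_norm {ι : Type*} [Fintype ι] (x : EuclideanSpace ℝ ι) :
    ‖x‖ ≤ ∑ j, ‖x j‖ := by
  rw [EuclideanSpace.norm_eq, Real.sqrt_le_iff]
  exact ⟨sum_nonneg fun j _ => norm_nonneg _,
    sum_sq_le_sq_sum_of_nonneg fun j _ => norm_nonneg _⟩

theorem exists_fine_partition_closedBall (m : ℕ) {δ : ℝ} (hδ : 0 < δ) :
    ∃ (W : Finset (Fin m → ℤ)) (ρ : (Fin m → ℤ) → EuclideanSpace ℝ (Fin m) → ℝ),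
      (∀ v, Continuous (ρ v)) ∧ (∀ v x, 0 ≤ ρ v x) ∧
      (∀ x, ‖x‖ ≤ 1 → ∑ v ∈ W, ρ v x = 1) ∧
      (∀ x, #{v ∈ W | ρ v x ≠ 0} ≤ m + 1) ∧
      (∀ v x x', ρ v x ≠ 0 → ρ v x' ≠ 0 → dist x x' < δ) := by
  set ε := δ / (2 * m + 1) with hε
  have hεpos : 0 < ε := by positivity
  set N : ℤ := ⌈ε⁻¹⌉ + 1
  refine ⟨Fintype.piFinset fun _ : Fin m => Icc (-N) N,
    fun v x => freudenthalHat (fun j => x j / ε) v,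
    fun v => (continuous_freudenthalHat v).comp (by fun_prop),
    fun v x => freudenthalHat_nonneg _ v, fun x hx => ?_,
    fun x => by simpa using card_filter_freudenthalHat_ne_zero_le (fun j => x j / ε) _,
    fun v x x' hx hx' => ?_⟩
  · refine (finsum_eq_sum_of_support_subset _ fun v hv => ?_).symm.trans (finsum_freudenthalHat _)
    rw [mem_coe, Fintype.mem_piFinset]
    intro j
    rw [mem_Icc]
    have hvj := abs_lt.1 (abs_sub_lt_one_of_freudenthalHat_ne_zero hv j)
    have hxj : |x j / ε| ≤ ε⁻¹ := by
      rw [abs_div, abs_of_pos hεpos, div_eq_mul_inv]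
      exact mul_le_of_le_one_left (inv_nonneg.2 hεpos.le) ((PiLp.norm_apply_le x j).trans hx)
    have hxj' := abs_le.1 hxj
    have hceil := Int.le_ceil ε⁻¹
    constructor
    · have : -(N : ℝ) ≤ v j := by push_cast [N]; linarith
      exact_mod_cast this
    · have : (v j : ℝ) ≤ N := by push_cast [N]; linarith
      exact_mod_cast this
  · have hcoord : ∀ j, ‖(x - x') j‖ ≤ 2 * ε := fun j => by
      have h := abs_lt.1 (abs_sub_lt_one_of_freudenthalHat_ne_zero hx j)
      have h' := abs_lt.1 (abs_sub_lt_one_of_freudenthalHat_ne_zero hx' j)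
      have hdiff : (x - x') j = ε * ((x j / ε - v j) - (x' j / ε - v j)) := by
        simp only [PiLp.sub_apply]
        field_simp
        ring
      rw [hdiff, norm_mul, Real.norm_of_nonneg hεpos.le, Real.norm_eq_abs, mul_comm 2 ε]
      gcongr
      rw [abs_le]
      constructor <;> linarith
    calc dist x x' ≤ ∑ j, ‖(x - x') j‖ :=
          (dist_eq_norm x x').trans_le (EuclideanSpace.norm_le_sum_norm _)
      _ ≤ ∑ _j : Fin m, 2 * ε := sum_le_sum fun j _ => hcoord j
      _ = 2 * m * ε := by simp; ring
      _ < δ := by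
        rw [hε, mul_div_assoc', div_lt_iff₀ (by positivity)]
        nlinarith

theorem exists_nerve_map_closedBall {m : ℕ} {V : Type*} [Fintype V] [Nonempty V]
    {O : V → Set (sphere (0 : EuclideanSpace ℝ (Fin m)) 1)} (hO : ∀ u, IsOpen (O u))
    (hcover : ∀ p, ∃ u, p ∈ O u) :
    ∃ φ : EuclideanSpace ℝ (Fin m) → V → ℝ, Continuous φ ∧
      (∀ x, ‖x‖ ≤ 1 → φ x ∈ stdSimplex ℝ V ∧ #{u | φ x u ≠ 0} ≤ m + 1) ∧
      ∀ (p : sphere (0 : EuclideanSpace ℝ (Fin m)) 1) u, φ p u ≠ 0 → p ∈ O u := by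
  classical
  obtain ⟨δ, hδ, hLebesgue⟩ := lebesgue_number_lemma_of_metric isCompact_univ hO
    fun p _ => Set.mem_iUnion.2 (hcover p)
  obtain ⟨W, ρ, hρ, hρ₀, hρ₁, hρord, hρmesh⟩ := exists_fine_partition_closedBall m hδ
  have hvertex : ∀ v, ∃ u, ∀ p : sphere (0 : EuclideanSpace ℝ (Fin m)) 1, ρ v p ≠ 0 → p ∈ O u := by
    intro v
    by_cases h : ∀ p : sphere (0 : EuclideanSpace ℝ (Fin m)) 1, ρ v p = 0
    · exact ⟨Classical.arbitrary V, fun p hp => absurd (h p) hp⟩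
    · obtain ⟨p₀, hp₀⟩ := not_forall.1 h
      obtain ⟨u, hu⟩ := hLebesgue p₀ trivial
      exact ⟨u, fun p hp => hu (mem_ball.2 (hρmesh v p p₀ hp hp₀))⟩
  choose w hw using hvertex
  have hsupport : ∀ x u, (∑ v ∈ W with w v = u, ρ v x) ≠ 0 → ∃ v ∈ W, w v = u ∧ ρ v x ≠ 0 := by
    intro x u h
    obtain ⟨v, hv, hρv⟩ := exists_ne_zero_of_sum_ne_zero h
    exact ⟨v, (mem_filter.1 hv).1, (mem_filter.1 hv).2, hρv⟩
  refine ⟨fun x u => ∑ v ∈ W with w v = u, ρ v x,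
    continuous_pi fun u => continuous_finsetSum _ fun v _ => hρ v, fun x hx => ⟨⟨?_, ?_⟩, ?_⟩,
    fun p u hpu => ?_⟩
  · exact fun u => sum_nonneg fun v _ => hρ₀ v x
  · rw [sum_fiberwise W w fun v => ρ v x, hρ₁ x hx]
  · refine (card_le_card (t := ({v ∈ W | ρ v x ≠ 0}).image w) fun u hu => ?_).trans
      (card_image_le.trans (hρord x))
    obtain ⟨v, hv, rfl, hρv⟩ := hsupport x u (mem_filter.1 hu).2
    exact mem_image_of_mem w (mem_filter.2 ⟨hv, hρv⟩)
  · obtain ⟨v, -, rfl, hρv⟩ := hsupport p u hpu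
    exact hw v p hρv

section RadialExtension

variable {F E : Type*} [NormedAddCommGroup F] [NormedSpace ℝ F]

open Classical in
noncomputable def radialExtension [Zero E] (f : sphere (0 : F) 1 → E) (x : F) : E :=
  if hx : x = 0 then 0 else f ⟨‖x‖⁻¹ • x, by simp [norm_smul, hx]⟩

theorem radialExtension_of_ne_zero [Zero E] (f : sphere (0 : F) 1 → E) {x : F} (hx : x ≠ 0) :
    radialExtension f x = f ⟨‖x‖⁻¹ • x, by simp [norm_smul, hx]⟩ := by
  rw [radialExtension, dif_neg hx]

theorem continuousAt_radialExtension [Zero E] [TopologicalSpace E] {f : sphere (0 : F) 1 → E}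
    (hf : Continuous f) {x : F} (hx : x ≠ 0) : ContinuousAt (radialExtension f) x := by
  have hrestrict : Set.domRestrict {0}ᶜ (radialExtension f) =
      f ∘ Prod.fst ∘ homeomorphUnitSphereProd F := by
    funext z
    rw [Set.domRestrict_apply, radialExtension_of_ne_zero f z.2]
    congr 1
    exact Subtype.ext (homeomorphUnitSphereProd_apply_fst_coe F z).symm
  have hon : ContinuousOn (radialExtension f) {0}ᶜ := by
    rw [continuousOn_iff_continuous_domRestrict, hrestrict]
    exact hf.comp (continuous_fst.comp (homeomorphUnitSphereProd F).continuous)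
  exact hon.continuousAt (isOpen_compl_singleton.mem_nhds hx)

theorem continuous_smul_radialExtension [AddCommGroup E] [Module ℝ E] [TopologicalSpace E]
    [ContinuousSMul ℝ E] {c : F → ℝ} (hc : Continuous c) (hc₀ : ∀ᶠ x in 𝓝 0, c x = 0)
    {f : sphere (0 : F) 1 → E} (hf : Continuous f) :
    Continuous fun x => c x • radialExtension f x := by
  refine continuous_iff_continuousAt.2 fun x => ?_
  rcases eq_or_ne x 0 with rfl | hx
  · refine (continuousAt_const (y := (0 : E))).congr (hc₀.mono fun y hy => ?_)
    simp [hy]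
  · exact hc.continuousAt.smul (continuousAt_radialExtension hf hx)

theorem exists_extension_of_segment_subset [AddCommGroup E] [Module ℝ E] [TopologicalSpace E]
    [ContinuousAdd E] [ContinuousSMul ℝ E] {X : Set E} (f : C(sphere (0 : F) 1, X))
    {φ : F → E} (hφ : Continuous φ) (hφX : ∀ x, ‖x‖ ≤ 1 → φ x ∈ X)
    (hseg : ∀ p : sphere (0 : F) 1, segment ℝ (φ p) (f p) ⊆ X) :
    ∃ g : C(closedBall (0 : F) 1, X), ∀ x (hx : x ∈ sphere (0 : F) 1),
      g ⟨x, sphere_subset_closedBall hx⟩ = f ⟨x, hx⟩ := by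
  -- `φ ∘ r` fills the ball of radius `1/2`; across the collar `1/2 ≤ ‖x‖ ≤ 1` the value slides
  -- along the segment from `φ (x / ‖x‖)` to `f (x / ‖x‖)`.
  set c : F → ℝ := fun x => max 0 (2 * ‖x‖ - 1)
  set r : F → F := fun x => (max ‖x‖ 2⁻¹)⁻¹ • x
  set G : F → E := fun x => c x • radialExtension (fun p => (f p : E)) x + (1 - c x) • φ (r x)
  have hmax : ∀ x : F, 0 < max ‖x‖ 2⁻¹ := fun x => lt_max_of_lt_right (by norm_num)
  have hG : Continuous G := by
    refine (continuous_smul_radialExtension (by fun_prop) ?_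
      (continuous_subtype_val.comp f.continuous)).add ?_
    · filter_upwards [ball_mem_nhds (0 : F) (by norm_num : (0 : ℝ) < 2⁻¹)] with x hx
      rw [mem_ball_zero_iff] at hx
      exact max_eq_left (by linarith)
    · refine (continuous_const.sub (by fun_prop)).smul (hφ.comp ?_)
      exact ((continuous_norm.max continuous_const).inv₀ fun x => (hmax x).ne').smul continuous_id
  have hGX : ∀ x, ‖x‖ ≤ 1 → G x ∈ X := by
    intro x hx
    rcases le_or_gt ‖x‖ 2⁻¹ with hsmall | hlarge
    · have hc : c x = 0 := max_eq_left (by linarith)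
      have hr : ‖r x‖ ≤ 1 := by
        rw [norm_smul, norm_inv, Real.norm_of_nonneg (hmax x).le]
        exact inv_mul_le_one_of_le₀ (le_max_left _ _) (hmax x).le
      simpa [G, hc] using hφX _ hr
    · have hx₀ : x ≠ 0 := norm_pos_iff.1 (by linarith)
      have hr : r x = ‖x‖⁻¹ • x := by simp only [r, max_eq_left hlarge.le]
      have hc₀ : 0 ≤ c x := le_max_left _ _
      have hc₁ : c x ≤ 1 := max_le zero_le_one (by linarith)
      refine hseg ⟨‖x‖⁻¹ • x, by simp [norm_smul, hx₀]⟩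
        ⟨1 - c x, c x, by linarith, hc₀, by ring, ?_⟩
      simp only [G, radialExtension_of_ne_zero _ hx₀, hr]
      abel
  have hGf : ∀ x (hx : x ∈ sphere (0 : F) 1), G x = f ⟨x, hx⟩ := by
    intro x hx
    have hx₁ : ‖x‖ = 1 := mem_sphere_zero_iff_norm.1 hx
    have hx₀ : x ≠ 0 := norm_ne_zero_iff.1 (by rw [hx₁]; exact one_ne_zero)
    have hc : c x = 1 := by simp only [c, hx₁]; norm_num
    simp only [G, hc, one_smul, sub_self, zero_smul, add_zero, radialExtension_of_ne_zero _ hx₀]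
    congr 3
    simp [hx₁]
  exact ⟨⟨fun x => ⟨G x, hGX x (mem_closedBall_zero_iff.1 x.2)⟩,
    (hG.comp continuous_subtype_val).subtype_mk _⟩, fun x hx => Subtype.ext (hGf x hx)⟩

end RadialExtension

section Realization

variable {V : Type*} [Fintype V]

theorem exists_pos_of_mem_stdSimplex {a : V → ℝ} (ha : a ∈ stdSimplex ℝ V) : ∃ v, 0 < a v := by
  by_contra! h
  linarith [ha.2, sum_nonpos fun v (_ : v ∈ univ) => h v]

theorem realization_subset_stdSimplex (K : Finset V → Prop) : realization K ⊆ stdSimplex ℝ V :=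
  fun _ ha => ⟨ha.1, ha.2.1⟩

theorem mem_realization_of_card_support_le {K : Finset V → Prop} {i : ℕ}
    (hK : ∀ S : Finset V, S.Nonempty → #S ≤ i → K S) {a : V → ℝ} (ha : a ∈ stdSimplex ℝ V)
    (hcard : #{v | a v ≠ 0} ≤ i) : a ∈ realization K := by
  obtain ⟨v, hv⟩ := exists_pos_of_mem_stdSimplex ha
  exact ⟨ha.1, ha.2, _, hK _ ⟨v, by simp [hv.ne']⟩ hcard, fun v hv => by simpa using hv⟩

theorem segment_subset_realization {K : Finset V → Prop} {a b : V → ℝ}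
    (ha : a ∈ stdSimplex ℝ V) (hb : b ∈ realization K) (hab : ∀ v, a v ≠ 0 → b v ≠ 0) :
    segment ℝ a b ⊆ realization K := by
  obtain ⟨hb₀, hb₁, S, hS, hSb⟩ := hb
  rintro _ ⟨s, t, hs, ht, hst, rfl⟩
  obtain ⟨h₀, h₁⟩ := convex_stdSimplex ℝ V ha ⟨hb₀, hb₁⟩ hs ht hst
  refine ⟨h₀, h₁, S, hS, fun v hv => ?_⟩
  have hbv := hSb v hv
  have hav : a v = 0 := by_contra fun h => hab v h hbv
  simp [hav, hbv]

end Realization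

theorem neighborly_implies_connected_general {V : Type*} [Fintype V] (K : Finset V → Prop)
    (i : ℕ) (hneighborly : ∀ S : Finset V, S.Nonempty → S.card ≤ i → K S) :
    IsKConnected (realization K) ((i : ℤ) - 2) := by
  intro n hn f
  let O (u : V) : Set (sphere (0 : EuclideanSpace ℝ (Fin (n + 1))) 1) := {p | 0 < (f p : V → ℝ) u}
  have hO : ∀ u, IsOpen (O u) := fun u => isOpen_lt continuous_const
    ((continuous_apply u).comp (continuous_subtype_val.comp f.continuous))
  have hcover : ∀ p, ∃ u, p ∈ O u := fun p =>
    exists_pos_of_mem_stdSimplex (realization_subset_stdSimplex K (f p).2)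
  obtain ⟨p₀⟩ : Nonempty (sphere (0 : EuclideanSpace ℝ (Fin (n + 1))) 1) :=
    (NormedSpace.sphere_nonempty.2 zero_le_one).to_subtype
  obtain ⟨u₀, -⟩ := hcover p₀
  have : Nonempty V := ⟨u₀⟩
  obtain ⟨φ, hφ, hφball, hφsphere⟩ := exists_nerve_map_closedBall hO hcover
  refine exists_extension_of_segment_subset f hφ (fun x hx => ?_) fun p => ?_
  · exact mem_realization_of_card_support_le hneighborly (hφball x hx).1
      ((hφball x hx).2.trans (by omega))
  · exact segment_subset_realization (hφball p (norm_eq_of_mem_sphere p).le).1 (f p).2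
      fun u hu => (hφsphere p u hu).ne'

/-- If a simplicial complex on at least `i + 1` vertices is `i`-neighborly (every nonempty
set of at most `i` vertices is a face), then its realization is `(i-2)`-connected. -/
theorem neighborly_implies_connected {V : Type*} [Fintype V] (K : Finset V → Prop)
    (hcomplex : ∀ S T : Finset V, K S → T ⊆ S → T.Nonempty → K T)
    (i : ℕ) (hcard : i + 1 ≤ Fintype.card V)
    (hneighborly : ∀ S : Finset V, S.Nonempty → S.card ≤ i → K S) :
    IsKConnected (realization K) ((i : ℤ) - 2) :=
  neighborly_implies_connected_general K i hneighborly
end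

section
/- For n ≥ 2, the graph X_n is strictly balanced with density 3(n-1)/4: its density is 3(n-1)/4 and every proper subgraph with at least one vertex has strictly smaller density. -/
/-- The graph `X_n` on vertex set `{u_1,...,u_n} ⊔ {v_1,...,v_n}`: the `u_i` span a clique,
the `v_j` form an independent set, and `u_i ~ v_j` iff `i ≠ j`. -/
def Xgraph (n : ℕ) : SimpleGraph (Fin n ⊕ Fin n) :=
  SimpleGraph.fromRel fun a b =>
    match a, b with
    | Sum.inl _, Sum.inl _ => True
    | Sum.inl i, Sum.inr j => i ≠ j
    | _, _ => False

/-- The density of a finite graph: (number of edges) / (number of vertices). -/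
noncomputable def density {V : Type*} [Fintype V] (G : SimpleGraph V) : ℚ :=
  (G.edgeSet.ncard : ℚ) / (Fintype.card V)

/-- The density of a subgraph: (number of its edges) / (number of its vertices). -/
noncomputable def subgraphDensity {V : Type*} {G : SimpleGraph V} (G' : G.Subgraph) : ℚ :=
  (G'.edgeSet.ncard : ℚ) / (G'.verts.ncard)

open Finset SimpleGraph

lemma Xgraph_adj {n : ℕ} (x y : Fin n ⊕ Fin n) :
    (Xgraph n).Adj x y ↔
      (∃ i i' : Fin n, i ≠ i' ∧ x = Sum.inl i ∧ y = Sum.inl i') ∨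
      (∃ i j : Fin n, i ≠ j ∧ x = Sum.inl i ∧ y = Sum.inr j) ∨
      (∃ j i : Fin n, i ≠ j ∧ x = Sum.inr j ∧ y = Sum.inl i) := by
  rcases x with i | j <;> rcases y with i' | j' <;>
    simp [Xgraph, SimpleGraph.fromRel_adj]

/-- pairs (inl i, inl i') with i,i' ∈ A, i ≠ i' -/
def Quu {n : ℕ} (A : Finset (Fin n)) : Finset ((Fin n ⊕ Fin n) × (Fin n ⊕ Fin n)) :=
  ((A ×ˢ A).filter fun p => p.1 ≠ p.2).image fun p => (Sum.inl p.1, Sum.inl p.2)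

/-- pairs (inl i, inr j) with i ∈ A, j ∈ B, i ≠ j -/
def Quv {n : ℕ} (A B : Finset (Fin n)) : Finset ((Fin n ⊕ Fin n) × (Fin n ⊕ Fin n)) :=
  ((A ×ˢ B).filter fun p => p.1 ≠ p.2).image fun p => (Sum.inl p.1, Sum.inr p.2)

/-- pairs (inr j, inl i) with i ∈ A, j ∈ B, i ≠ j -/
def Qvu {n : ℕ} (A B : Finset (Fin n)) : Finset ((Fin n ⊕ Fin n) × (Fin n ⊕ Fin n)) :=
  ((B ×ˢ A).filter fun p => p.1 ≠ p.2).image fun p => (Sum.inr p.1, Sum.inl p.2)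

lemma offdiag_card_aux {n : ℕ} (s t : Finset (Fin n)) :
    ((s ×ˢ t).filter fun p => p.1 ≠ p.2).card + (s ∩ t).card = s.card * t.card := by
  classical
  have h1 : ((s ×ˢ t).filter fun p => p.1 = p.2) = (s ∩ t).image (fun i => (i, i)) := by
    ext ⟨x, y⟩
    simp only [mem_filter, mem_product, mem_image, mem_inter, Prod.mk.injEq]
    constructor
    · rintro ⟨⟨hx, hy⟩, rfl⟩; exact ⟨x, ⟨hx, hy⟩, rfl, rfl⟩
    · rintro ⟨i, ⟨hi1, hi2⟩, rfl, rfl⟩; exact ⟨⟨hi1, hi2⟩, rfl⟩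
  have h2 : ((s ×ˢ t).filter fun p => p.1 = p.2).card = (s ∩ t).card := by
    rw [h1]; exact card_image_of_injective _ (fun a b h => by simpa using h)
  have := Finset.card_filter_add_card_filter_not
    (s := s ×ˢ t) (p := fun p => p.1 ≠ p.2)
  simp only [not_ne_iff] at this
  rw [← Finset.card_product s t, ← this, h2]

lemma Quu_card {n : ℕ} (A : Finset (Fin n)) : (Quu A).card + A.card = A.card * A.card := by
  classical
  rw [Quu, card_image_of_injective _ (fun a b h => by
    simpa [Prod.ext_iff, Sum.inl.injEq, Prod.mk.injEq] using h)]
  simpa using offdiag_card_aux A A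

lemma Quv_card {n : ℕ} (A B : Finset (Fin n)) :
    (Quv A B).card + (A ∩ B).card = A.card * B.card := by
  classical
  rw [Quv, card_image_of_injective _ (fun a b h => by
    simpa [Prod.ext_iff, Prod.mk.injEq] using h)]
  exact offdiag_card_aux A B

lemma Qvu_card {n : ℕ} (A B : Finset (Fin n)) :
    (Qvu A B).card + (A ∩ B).card = A.card * B.card := by
  classical
  rw [Qvu, card_image_of_injective _ (fun a b h => by
    simpa [Prod.ext_iff, Prod.mk.injEq] using h)]
  rw [Finset.inter_comm A B, mul_comm A.card B.card]
  exact offdiag_card_aux B A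

open scoped Classical in
lemma two_mul_ncard_edgeSet {V : Type*} [Fintype V] {G : SimpleGraph V} (G' : G.Subgraph) :
    2 * G'.edgeSet.ncard = (univ.filter fun p : V × V => G'.Adj p.1 p.2).card := by
  classical
  have hes : G'.spanningCoe.edgeSet = G'.edgeSet := rfl
  have h1 : G'.edgeSet.ncard = G'.spanningCoe.edgeFinset.card := by
    rw [← hes, SimpleGraph.edgeFinset, Set.ncard_eq_toFinset_card']
  rw [h1, SimpleGraph.two_mul_card_edgeFinset]
  refine Finset.card_bij' (fun p _ => p) (fun p _ => p) ?_ ?_ ?_ ?_ <;> simp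

open scoped Classical in
lemma P_subset {n : ℕ} (G' : (Xgraph n).Subgraph) (A B : Finset (Fin n))
    (hA : ∀ i, Sum.inl i ∈ G'.verts → i ∈ A) (hB : ∀ j, Sum.inr j ∈ G'.verts → j ∈ B) :
    (univ.filter fun p : (Fin n ⊕ Fin n) × (Fin n ⊕ Fin n) => G'.Adj p.1 p.2)
      ⊆ Quu A ∪ Quv A B ∪ Qvu A B := by
  intro ⟨x, y⟩ hp
  rw [mem_filter] at hp
  have hadj : G'.Adj x y := hp.2
  have hx : x ∈ G'.verts := hadj.fst_mem
  have hy : y ∈ G'.verts := hadj.snd_mem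
  have hX : (Xgraph n).Adj x y := G'.adj_sub hadj
  rw [Xgraph_adj] at hX
  rcases hX with ⟨i, i', hne, rfl, rfl⟩ | ⟨i, j, hne, rfl, rfl⟩ | ⟨j, i, hne, rfl, rfl⟩
  · refine mem_union_left _ (mem_union_left _ ?_)
    simp only [Quu, mem_image, mem_filter, mem_product]
    exact ⟨(i, i'), ⟨⟨hA _ hx, hA _ hy⟩, hne⟩, rfl⟩
  · refine mem_union_left _ (mem_union_right _ ?_)
    simp only [Quv, mem_image, mem_filter, mem_product]
    exact ⟨(i, j), ⟨⟨hA _ hx, hB _ hy⟩, hne⟩, rfl⟩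
  · refine mem_union_right _ ?_
    simp only [Qvu, mem_image, mem_filter, mem_product]
    exact ⟨(j, i), ⟨⟨hB _ hx, hA _ hy⟩, hne.symm⟩, rfl⟩

open scoped Classical in
lemma P_top {n : ℕ} :
    (univ.filter fun p : (Fin n ⊕ Fin n) × (Fin n ⊕ Fin n) =>
        (⊤ : (Xgraph n).Subgraph).Adj p.1 p.2)
      = Quu (univ : Finset (Fin n)) ∪ Quv univ univ ∪ Qvu univ univ := by
  apply Finset.Subset.antisymm
  · exact P_subset _ _ _ (fun i _ => mem_univ i) (fun j _ => mem_univ j)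
  · intro ⟨x, y⟩ hp
    rw [mem_filter]
    refine ⟨mem_univ _, ?_⟩
    rw [Subgraph.top_adj, Xgraph_adj]
    simp only [Quu, Quv, Qvu, mem_union, mem_image, mem_filter, mem_product] at hp
    rcases hp with (⟨⟨i, i'⟩, ⟨_, hne⟩, heq⟩ | ⟨⟨i, j⟩, ⟨_, hne⟩, heq⟩) | ⟨⟨j, i⟩, ⟨_, hne⟩, heq⟩
    · cases heq; exact Or.inl ⟨i, i', hne, rfl, rfl⟩
    · cases heq; exact Or.inr (Or.inl ⟨i, j, hne, rfl, rfl⟩)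
    · cases heq; exact Or.inr (Or.inr ⟨j, i, hne.symm, rfl, rfl⟩)

lemma Q_disj {n : ℕ} (A B : Finset (Fin n)) :
    (Quu A ∪ Quv A B ∪ Qvu A B).card = (Quu A).card + (Quv A B).card + (Qvu A B).card := by
  classical
  rw [card_union_of_disjoint, card_union_of_disjoint]
  · rw [Finset.disjoint_left]
    rintro ⟨x, y⟩ h1 h2
    simp only [Quu, Quv, mem_image, mem_filter, Prod.mk.injEq] at h1 h2
    obtain ⟨p, -, -, hy1⟩ := h1
    obtain ⟨q, -, -, hy2⟩ := h2
    have := hy1.trans hy2.symm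
    simp at this
  · rw [Finset.disjoint_left]
    rintro ⟨x, y⟩ h1 h2
    simp only [Quu, Quv, Qvu, mem_union, mem_image, mem_filter, Prod.mk.injEq] at h1 h2
    obtain ⟨q, -, hx2, -⟩ := h2
    rcases h1 with ⟨p, -, hx1, -⟩ | ⟨p, -, hx1, -⟩ <;>
      · have := hx1.trans hx2.symm
        simp at this

lemma arith_case {n a b c e : ℕ} (hn : 2 ≤ n) (ha : a ≤ n) (hb : b ≤ n)
    (hab1 : 1 ≤ a + b) (hab2 : a + b < 2 * n) (hc : a + b ≤ n + c)
    (he : 2 * e + (a + 2 * c) ≤ a * a + 2 * (a * b)) :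
    (e : ℚ) / (a + b) < 3 * ((n : ℚ) - 1) / 4 := by
  have hab : (0 : ℚ) < (a : ℚ) + b := by
    have : (1 : ℚ) ≤ (a : ℚ) + b := by exact_mod_cast hab1
    linarith
  rw [div_lt_div_iff₀ hab (by norm_num)]
  have hn' : (2 : ℚ) ≤ n := by exact_mod_cast hn
  have ha' : (a : ℚ) ≤ n := by exact_mod_cast ha
  have hb' : (b : ℚ) ≤ n := by exact_mod_cast hb
  have hab1' : (1 : ℚ) ≤ (a : ℚ) + b := by exact_mod_cast hab1
  have hab2' : (a : ℚ) + b < 2 * n := by exact_mod_cast hab2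
  have hc' : (a : ℚ) + b ≤ n + c := by exact_mod_cast hc
  have he' : 2 * (e : ℚ) + (a + 2 * c) ≤ a * a + 2 * (a * b) := by exact_mod_cast he
  have hc0 : (0 : ℚ) ≤ c := by positivity
  have hb3 : (0 : ℚ) ≤ (b : ℚ) * ((b : ℚ) - 1) := by
    rcases Nat.eq_zero_or_pos b with h | h
    · subst h; norm_num
    · have : (1 : ℚ) ≤ (b : ℚ) := by exact_mod_cast h
      nlinarith
  rcases le_or_gt ((a : ℚ) + b) n with h | h
  · nlinarith [sq_nonneg ((a : ℚ) + b - 1), mul_nonneg (sub_nonneg.2 h) (sub_nonneg.2 hab1'),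
      mul_nonneg (Nat.cast_nonneg a : (0:ℚ) ≤ a) (Nat.cast_nonneg b : (0:ℚ) ≤ b)]
  · have h1 : (0 : ℚ) ≤ ((n : ℚ) - a) * (2 * ((a : ℚ) + b) - n - a - 1) := by
      apply mul_nonneg (by linarith)
      have : (n : ℚ) + 1 ≤ (a : ℚ) + b := by
        have : (n : ℕ) < a + b := by exact_mod_cast h
        exact_mod_cast this
      linarith
    have h2 : (1 : ℚ) ≤ ((n : ℚ) - 1) * (2 * n - ((a : ℚ) + b)) := by
      have h3 : (a : ℚ) + b ≤ 2 * n - 1 := by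
        have : a + b + 1 ≤ 2 * n := hab2
        have := (Nat.cast_le (α := ℚ)).2 this
        push_cast at this
        linarith
      nlinarith
    nlinarith [h1, h2]

/-- Total edge count of `Xgraph n`. -/
lemma Xgraph_edge_count (n : ℕ) :
    2 * (Xgraph n).edgeSet.ncard + 3 * n = 3 * (n * n) := by
  classical
  have h2 := two_mul_ncard_edgeSet (⊤ : (Xgraph n).Subgraph)
  have h1 : (⊤ : (Xgraph n).Subgraph).edgeSet = (Xgraph n).edgeSet := rfl
  rw [h1] at h2
  rw [h2, P_top, Q_disj]
  have q1 := Quu_card (univ : Finset (Fin n))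
  have q2 := Quv_card (univ : Finset (Fin n)) univ
  have q3 := Qvu_card (univ : Finset (Fin n)) univ
  simp only [Finset.inter_self, Finset.card_univ, Fintype.card_fin] at q1 q2 q3
  omega

/-- For `n ≥ 2`, the graph `X_n` is strictly balanced with density `3(n-1)/4`: its density
is `3(n-1)/4` and every proper subgraph with at least one vertex has strictly smaller
density. -/
theorem Xgraph_strictly_balanced (n : ℕ) (hn : 2 ≤ n) :
    density (Xgraph n) = 3 * ((n : ℚ) - 1) / 4 ∧
    ∀ G' : (Xgraph n).Subgraph, G' ≠ ⊤ → G'.verts.Nonempty →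
      subgraphDensity G' < 3 * ((n : ℚ) - 1) / 4 := by
  classical
  have hcardV : Fintype.card (Fin n ⊕ Fin n) = 2 * n := by
    simp [Fintype.card_sum]; omega
  have hE := Xgraph_edge_count n
  have hEq : 2 * ((Xgraph n).edgeSet.ncard : ℚ) + 3 * n = 3 * (n * n) := by
    exact_mod_cast hE
  have hnq : (2 : ℚ) ≤ (n : ℚ) := by exact_mod_cast hn
  constructor
  · unfold density
    rw [hcardV]
    have h2n : ((2 * n : ℕ) : ℚ) ≠ 0 := by
      push_cast; nlinarith
    rw [div_eq_div_iff (by push_cast; nlinarith) (by norm_num)]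
    push_cast
    nlinarith [hEq]
  · intro G' hne hnonempty
    set A : Finset (Fin n) := univ.filter (fun i => Sum.inl i ∈ G'.verts) with hAdef
    set B : Finset (Fin n) := univ.filter (fun j => Sum.inr j ∈ G'.verts) with hBdef
    have hvfin : G'.verts.toFinset = A.image Sum.inl ∪ B.image Sum.inr := by
      ext x
      rcases x with i | j <;> simp [hAdef, hBdef]
    have hverts : G'.verts.ncard = A.card + B.card := by
      rw [Set.ncard_eq_toFinset_card', hvfin, card_union_of_disjoint, 
        card_image_of_injective _ Sum.inl_injective, card_image_of_injective _ Sum.inr_injective]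
      rw [Finset.disjoint_left]
      rintro x hx1 hx2
      simp only [mem_image] at hx1 hx2
      obtain ⟨i, -, rfl⟩ := hx1
      obtain ⟨j, -, h⟩ := hx2
      simp at h
    by_cases hu : G'.verts = Set.univ
    · -- all vertices present, some edge missing
      have hsub : G'.edgeSet ⊆ (Xgraph n).edgeSet := Subgraph.edgeSet_subset G'
      have hneq : G'.edgeSet ≠ (Xgraph n).edgeSet := by
        intro h
        apply hne
        refine Subgraph.ext hu ?_
        funext x y
        apply propext
        constructor
        · intro h'; exact G'.adj_sub h'
        · intro h'
          have : s(x, y) ∈ G'.edgeSet := by rw [h]; exact h'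
          exact this
      have hlt : G'.edgeSet.ncard < (Xgraph n).edgeSet.ncard :=
        Set.ncard_lt_ncard (ssubset_of_subset_of_ne hsub hneq) (Set.toFinite _)
      unfold subgraphDensity
      rw [hu, Set.ncard_univ, Nat.card_eq_fintype_card, hcardV]
      have hltq : (G'.edgeSet.ncard : ℚ) < ((Xgraph n).edgeSet.ncard : ℚ) := by
        exact_mod_cast hlt
      rw [div_lt_div_iff₀ (by push_cast; nlinarith) (by norm_num)]
      push_cast
      nlinarith [hEq, hltq]
    · -- some vertex missing
      have ha : A.card ≤ n := by
        simpa using Finset.card_le_univ A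
      have hb : B.card ≤ n := by
        simpa using Finset.card_le_univ B
      have hab1 : 1 ≤ A.card + B.card := by
        rw [← hverts]
        have : 0 < G'.verts.ncard := by
          rw [Set.ncard_pos (Set.toFinite _)]
          exact hnonempty
        omega
      have hab2 : A.card + B.card < 2 * n := by
        have hne2 : G'.verts.toFinset ≠ univ := by
          intro h
          apply hu
          rw [← Set.coe_toFinset G'.verts, h]
          simp
        have hss : G'.verts.toFinset ⊂ univ := ssubset_univ_iff.mpr hne2
        have := Finset.card_lt_card hss
        rw [Finset.card_univ, hcardV] at this
        have hv2 : G'.verts.toFinset.card = A.card + B.card := by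
          rw [← Set.ncard_eq_toFinset_card', hverts]
        omega
      have hc : A.card + B.card ≤ n + (A ∩ B).card := by
        have h1 := Finset.card_union_add_card_inter A B
        have h2 : (A ∪ B).card ≤ n := by simpa using Finset.card_le_univ (A ∪ B)
        omega
      have he : 2 * G'.edgeSet.ncard + (A.card + 2 * (A ∩ B).card)
          ≤ A.card * A.card + 2 * (A.card * B.card) := by
        have h2 := two_mul_ncard_edgeSet G'
        have hsub := P_subset G' A B
          (fun i hi => by simp [hAdef, hi]) (fun j hj => by simp [hBdef, hj])
        have h3 := Finset.card_le_card hsub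
        rw [Q_disj] at h3
        have q1 := Quu_card A
        have q2 := Quv_card A B
        have q3 := Qvu_card A B
        omega
      unfold subgraphDensity
      rw [hverts]
      have := arith_case hn ha hb hab1 hab2 hc he
      push_cast at this ⊢
      exact this
end

section
/- For p = 1/2 and fixed ε > 0, if l = l(n) ≤ (1-ε)·log₂(n), then binomial(n, l)·(1 - 2^{-l})^{n-l} → 0 as n → ∞. -/
open Filter

/-- Auxiliary: the pointwise upper bound. -/
lemma first_moment_pointwise (ε' : ℝ) (hε'0 : 0 < ε') (hε'1 : ε' < 1) (n L : ℕ)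
    (hn : 2 ≤ n) (hlog : Real.log n ≤ (n : ℝ) / 4)
    (hL : (L : ℝ) ≤ (1 - ε') * Real.logb 2 n) :
    (n.choose L : ℝ) * (1 - (1/2 : ℝ) ^ L) ^ (n - L) ≤
      Real.exp (2 * (Real.log n) ^ 2 - (n : ℝ) ^ ε' / 2) := by
  have hn0 : (0 : ℝ) < n := by positivity
  have hn1 : (1 : ℝ) < n := by exact_mod_cast hn
  have hlogpos : 0 < Real.log n := Real.log_pos hn1
  -- L ≤ 2 log n
  have hlogb : Real.logb 2 n = Real.log n / Real.log 2 := rfl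
  have hlog2 : (1/2 : ℝ) < Real.log 2 := by
    have := Real.log_two_gt_d9; linarith
  have hL2 : (L : ℝ) ≤ 2 * Real.log n := by
    have h1 : (1 - ε') * Real.logb 2 n ≤ Real.logb 2 n := by
      have : 0 ≤ Real.logb 2 n := by
        rw [hlogb]; positivity
      nlinarith
    have h2 : Real.logb 2 n ≤ 2 * Real.log n := by
      rw [hlogb, div_le_iff₀ (by linarith)]
      nlinarith
    linarith [hL.trans h1]
  -- L ≤ n/2, hence L ≤ n
  have hLn2 : (L : ℝ) ≤ (n : ℝ) / 2 := by linarith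
  have hLn : L ≤ n := by
    have : (L : ℝ) ≤ (n : ℝ) := by linarith
    exact_mod_cast this
  have hmcast : ((n - L : ℕ) : ℝ) = (n : ℝ) - L := by
    rw [Nat.cast_sub hLn]
  have hm : (n : ℝ) / 2 ≤ ((n - L : ℕ) : ℝ) := by rw [hmcast]; linarith
  set c : ℝ := (1/2 : ℝ) ^ L with hc
  have hc0 : 0 < c := by positivity
  have hc1 : c ≤ 1 := pow_le_one₀ (by norm_num) (by norm_num)
  -- c ≥ n^(ε'-1)
  have h2L : (2 : ℝ) ^ L ≤ (n : ℝ) ^ (1 - ε') := by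
    have : (2 : ℝ) ^ (L : ℝ) ≤ (2 : ℝ) ^ ((1 - ε') * Real.logb 2 n) :=
      Real.rpow_le_rpow_of_exponent_le one_le_two hL
    rw [Real.rpow_natCast] at this
    refine this.trans_eq ?_
    rw [mul_comm, Real.rpow_mul (by norm_num), Real.rpow_logb (by norm_num) (by norm_num) hn0]
  have hcge : (n : ℝ) ^ (ε' - 1) ≤ c := by
    have h2Lpos : (0 : ℝ) < (2 : ℝ) ^ L := by positivity
    have : (n : ℝ) ^ (ε' - 1) = ((n : ℝ) ^ (1 - ε'))⁻¹ := by
      rw [← Real.rpow_neg hn0.le]; ring_nf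
    rw [this, hc, one_div, inv_pow]
    exact inv_anti₀ h2Lpos h2L
  -- main chain
  have step1 : (n.choose L : ℝ) ≤ (n : ℝ) ^ L := by
    exact_mod_cast Nat.choose_le_pow n L
  have step2 : (1 - c) ^ (n - L) ≤ Real.exp (-(((n - L : ℕ) : ℝ) * c)) := by
    have hbase : (1 - c) ≤ Real.exp (-c) := by
      linarith [Real.add_one_le_exp (-c)]
    calc (1 - c) ^ (n - L) ≤ (Real.exp (-c)) ^ (n - L) :=
          pow_le_pow_left₀ (by linarith) hbase _
      _ = Real.exp (-(((n - L : ℕ) : ℝ) * c)) := by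
          rw [← Real.exp_nat_mul]; ring_nf
  have step1' : ((n : ℝ)) ^ L = Real.exp (L * Real.log n) := by
    rw [← Real.rpow_natCast, Real.rpow_def_of_pos hn0]; ring_nf
  have hnonneg : 0 ≤ (1 - c) ^ (n - L) := pow_nonneg (by linarith) _
  calc (n.choose L : ℝ) * (1 - c) ^ (n - L)
      ≤ (n : ℝ) ^ L * Real.exp (-(((n - L : ℕ) : ℝ) * c)) := by
        apply mul_le_mul step1 step2 hnonneg (by positivity)
    _ = Real.exp ((L : ℝ) * Real.log n - ((n - L : ℕ) : ℝ) * c) := by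
        rw [step1', ← Real.exp_add]; ring_nf
    _ ≤ Real.exp (2 * (Real.log n) ^ 2 - (n : ℝ) ^ ε' / 2) := by
        apply Real.exp_le_exp.2
        have hA : (L : ℝ) * Real.log n ≤ 2 * (Real.log n) ^ 2 := by nlinarith
        have hB : (n : ℝ) ^ ε' / 2 ≤ ((n - L : ℕ) : ℝ) * c := by
          have h1 : (n : ℝ) / 2 * ((n : ℝ) ^ (ε' - 1)) ≤ ((n - L : ℕ) : ℝ) * c := by
            apply mul_le_mul hm hcge (by positivity) (by positivity)
          have h2 : (n : ℝ) * (n : ℝ) ^ (ε' - 1) = (n : ℝ) ^ ε' := by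
            nth_rewrite 1 [← Real.rpow_one (n : ℝ)]
            rw [← Real.rpow_add hn0]; ring_nf
          nlinarith [h1, h2]
        linarith

/-- For `p = 1/2` and fixed `ε > 0`, if `l = l(n) ≤ (1-ε) log₂ n`, then
`choose n l * (1 - 2^{-l})^{n-l} → 0` as `n → ∞`. -/
theorem first_moment_common_neighbor (ε : ℝ) (hε : 0 < ε) (l : ℕ → ℕ)
    (hl : ∀ n : ℕ, (l n : ℝ) ≤ (1 - ε) * Real.logb 2 n) :
    Tendsto (fun n : ℕ => (n.choose (l n) : ℝ) * (1 - (1/2 : ℝ) ^ l n) ^ (n - l n))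
      atTop (nhds 0) := by
  set ε' : ℝ := min ε (1/2) with hε'def
  have hε'0 : 0 < ε' := lt_min hε (by norm_num)
  have hε'1 : ε' < 1 := lt_of_le_of_lt (min_le_right _ _) (by norm_num)
  have hl' : ∀ n : ℕ, 2 ≤ n → (l n : ℝ) ≤ (1 - ε') * Real.logb 2 n := by
    intro n hn
    refine (hl n).trans (mul_le_mul_of_nonneg_right ?_ ?_)
    · have := min_le_left ε (1/2 : ℝ); linarith
    · exact Real.logb_nonneg one_lt_two (by exact_mod_cast hn.trans' (by norm_num))
  -- the dominating function tends to 0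
  have hnat : Tendsto (fun n : ℕ => (n : ℝ)) atTop atTop := tendsto_natCast_atTop_atTop
  have hlittle := isLittleO_log_rpow_rpow_atTop (2 : ℝ) hε'0
  have hev1 : ∀ᶠ x : ℝ in atTop, ‖Real.log x ^ (2 : ℝ)‖ ≤ (1/8) * ‖x ^ ε'‖ :=
    hlittle.bound (by norm_num)
  have hev1' : ∀ᶠ n : ℕ in atTop, 2 * (Real.log n) ^ 2 - (n : ℝ) ^ ε' / 2 ≤
      -((n : ℝ) ^ ε' / 4) := by
    filter_upwards [hnat.eventually hev1, hnat.eventually (eventually_ge_atTop (1 : ℝ))]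
      with n h1 h2
    have hx : (0 : ℝ) ≤ (n : ℝ) ^ ε' := Real.rpow_nonneg (by linarith) _
    have hlognn : 0 ≤ Real.log n := Real.log_nonneg h2
    rw [Real.norm_eq_abs, Real.norm_eq_abs, Real.rpow_two, abs_of_nonneg hx,
      abs_of_nonneg (sq_nonneg _)] at h1
    nlinarith [h1]
  have hg : Tendsto (fun n : ℕ => Real.exp (2 * (Real.log n) ^ 2 - (n : ℝ) ^ ε' / 2))
      atTop (nhds 0) := by
    apply Real.tendsto_exp_atBot.comp
    apply tendsto_atBot_mono' _ hev1'
    have : Tendsto (fun n : ℕ => (n : ℝ) ^ ε') atTop atTop :=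
      (tendsto_rpow_atTop hε'0).comp hnat
    exact tendsto_neg_atBot_iff.2 (this.atTop_div_const (by norm_num))
  -- squeeze
  refine squeeze_zero' (Eventually.of_forall fun n => ?_) ?_ hg
  · have hc1 : ((1:ℝ)/2) ^ l n ≤ 1 := pow_le_one₀ (by norm_num) (by norm_num)
    exact mul_nonneg (Nat.cast_nonneg _) (pow_nonneg (by linarith) _)
  · filter_upwards [eventually_ge_atTop 2,
      hnat.eventually ((Real.isLittleO_log_id_atTop.bound (c := 1/4) (by norm_num)).and
        (eventually_ge_atTop (1 : ℝ)))] with n hn hlog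
    obtain ⟨hlog, hn1⟩ := hlog
    simp only [id_eq] at hlog
    rw [Real.norm_eq_abs, Real.norm_eq_abs, abs_of_nonneg (Real.log_nonneg hn1),
      abs_of_nonneg (by linarith)] at hlog
    exact first_moment_pointwise ε' hε'0 hε'1 n (l n) hn (by linarith) (hl' n hn)
end

section
/- Let l be a fixed nonnegative integer and p = n^α with α > -1/(l+2). Then binomial(n, l+2)·(1 - p^{l+2})^{n-l} → 0 as n → ∞. -/
open Filter Real

/-- Let `l` be a fixed nonnegative integer and `p = n^α` with `-1/(l+2) < α ≤ 0`. Then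
`choose n (l+2) * (1 - p^(l+2))^(n-l) → 0` as `n → ∞`. -/
theorem first_moment_neighborly (l : ℕ) (α : ℝ)
    (hα : -1 / ((l : ℝ) + 2) < α) (hα0 : α ≤ 0) :
    Tendsto (fun n : ℕ =>
        (n.choose (l + 2) : ℝ) * (1 - ((n : ℝ) ^ α) ^ (l + 2)) ^ (n - l))
      atTop (nhds 0) := by
  set k : ℕ := l + 2 with hk
  set β : ℝ := α * k with hβdef
  have hkpos : (0:ℝ) < (k:ℝ) := by positivity
  have hkeq : ((l:ℝ) + 2) = (k:ℝ) := by push_cast [hk]; ring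
  have hβ1 : -1 < β := by
    have := (div_lt_iff₀ hkpos).mp (by rw [← hkeq] at *; exact hα)
    linarith [this]
  have hβ0 : β ≤ 0 := mul_nonpos_of_nonpos_of_nonneg hα0 hkpos.le
  set c : ℝ := 1 + β with hcdef
  have hc : 0 < c := by linarith
  -- real-variable growth fact
  have hreal : Tendsto (fun x : ℝ => (k:ℝ) * Real.log x - x ^ c / 2) atTop atBot := by
    have hlo : (fun x : ℝ => (k:ℝ) * Real.log x) =o[atTop] fun x => x ^ c :=
      (isLittleO_log_rpow_atTop hc).const_mul_left _
    have hev := hlo.bound (by norm_num : (0:ℝ) < 1/4)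
    have hquart : Tendsto (fun x : ℝ => -(x ^ c / 4)) atTop atBot := by
      apply tendsto_neg_atTop_atBot.comp
      exact (tendsto_rpow_atTop hc).atTop_div_const (by norm_num)
    refine tendsto_atBot_mono' _ ?_ hquart
    filter_upwards [hev, eventually_ge_atTop (0:ℝ)] with x hx hx0
    have hxc : 0 ≤ x ^ c := rpow_nonneg hx0 c
    have : (k:ℝ) * Real.log x ≤ (1/4) * x ^ c := by
      calc (k:ℝ) * Real.log x ≤ ‖(k:ℝ) * Real.log x‖ := le_norm_self _
        _ ≤ (1/4) * ‖x ^ c‖ := hx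
        _ = (1/4) * x ^ c := by rw [Real.norm_of_nonneg hxc]
    linarith
  -- exponent over ℕ tends to -∞
  have key : Tendsto (fun n : ℕ => (k:ℝ) * Real.log n - ((n - l : ℕ) : ℝ) * (n:ℝ) ^ β)
      atTop atBot := by
    refine tendsto_atBot_mono' atTop ?_
      ((hreal.comp tendsto_natCast_atTop_atTop : Tendsto _ atTop atBot))
    filter_upwards [eventually_ge_atTop (2 * l + 1)] with n hn
    have hln : l ≤ n := by omega
    have hn1 : (1:ℝ) ≤ (n:ℝ) := by exact_mod_cast Nat.one_le_iff_ne_zero.mpr (by omega)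
    have hnpos : (0:ℝ) < (n:ℝ) := by linarith
    have hcast : ((n - l : ℕ) : ℝ) = (n:ℝ) - l := by
      rw [Nat.cast_sub hln]
    have hhalf : (n:ℝ) / 2 ≤ (n:ℝ) - l := by
      have : (2 * l : ℝ) ≤ (n:ℝ) := by exact_mod_cast (by omega : 2 * l ≤ n)
      linarith
    have hβpos : 0 < (n:ℝ) ^ β := rpow_pos_of_pos hnpos β
    have hmul : (n:ℝ) ^ c / 2 ≤ ((n - l : ℕ) : ℝ) * (n:ℝ) ^ β := by
      rw [hcast, hcdef, rpow_add hnpos, rpow_one]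
      calc (n:ℝ) * (n:ℝ) ^ β / 2 = ((n:ℝ) / 2) * (n:ℝ) ^ β := by ring
        _ ≤ ((n:ℝ) - l) * (n:ℝ) ^ β := by
            exact mul_le_mul_of_nonneg_right hhalf hβpos.le
    simp only [Function.comp]
    linarith
  have hexp : Tendsto (fun n : ℕ =>
      Real.exp ((k:ℝ) * Real.log n - ((n - l : ℕ) : ℝ) * (n:ℝ) ^ β)) atTop (nhds 0) :=
    Real.tendsto_exp_atBot.comp key
  refine squeeze_zero' ?_ ?_ hexp
  · -- nonnegativity
    filter_upwards [eventually_ge_atTop 1] with n hn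
    have hn1 : (1:ℝ) ≤ (n:ℝ) := by exact_mod_cast hn
    have h1 : ((n:ℝ) ^ α) ^ (l + 2) = (n:ℝ) ^ β := by
      rw [hβdef, rpow_mul (by positivity : (0:ℝ) ≤ (n:ℝ)), rpow_natCast, hk]
    rw [h1]
    have h2 : (n:ℝ) ^ β ≤ 1 := rpow_le_one_of_one_le_of_nonpos hn1 hβ0
    exact mul_nonneg (by positivity) (pow_nonneg (by linarith) _)
  · -- upper bound
    filter_upwards [eventually_ge_atTop 1] with n hn
    have hn1 : (1:ℝ) ≤ (n:ℝ) := by exact_mod_cast hn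
    have hnpos : (0:ℝ) < (n:ℝ) := by linarith
    have h1 : ((n:ℝ) ^ α) ^ (l + 2) = (n:ℝ) ^ β := by
      rw [hβdef, rpow_mul (by positivity : (0:ℝ) ≤ (n:ℝ)), rpow_natCast, hk]
    have h2 : (n:ℝ) ^ β ≤ 1 := rpow_le_one_of_one_le_of_nonpos hn1 hβ0
    have h2' : (0:ℝ) ≤ 1 - (n:ℝ) ^ β := by linarith
    have hchoose : (n.choose (l + 2) : ℝ) ≤ (n:ℝ) ^ k := by
      rw [hk]
      exact_mod_cast Nat.cast_le.mpr (Nat.choose_le_pow n (l + 2))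
    have hfac : (1 - (n:ℝ) ^ β) ^ (n - l) ≤
        Real.exp (-(((n - l : ℕ) : ℝ) * (n:ℝ) ^ β)) := by
      calc (1 - (n:ℝ) ^ β) ^ (n - l)
          ≤ (Real.exp (-(n:ℝ) ^ β)) ^ (n - l) := by
            apply pow_le_pow_left₀ h2'
            linarith [Real.add_one_le_exp (-(n:ℝ) ^ β)]
        _ = Real.exp (-(((n - l : ℕ) : ℝ) * (n:ℝ) ^ β)) := by
            rw [← Real.exp_nat_mul]
            ring_nf
    have hnk : (n:ℝ) ^ k = Real.exp ((k:ℝ) * Real.log n) := by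
      rw [Real.exp_nat_mul, Real.exp_log hnpos]
    calc (n.choose (l + 2) : ℝ) * (1 - ((n : ℝ) ^ α) ^ (l + 2)) ^ (n - l)
        ≤ (n:ℝ) ^ k * Real.exp (-(((n - l : ℕ) : ℝ) * (n:ℝ) ^ β)) := by
          rw [h1]
          exact mul_le_mul hchoose hfac (pow_nonneg h2' _) (by positivity)
      _ = Real.exp ((k:ℝ) * Real.log n - ((n - l : ℕ) : ℝ) * (n:ℝ) ^ β) := by
          rw [hnk, ← Real.exp_add]
          ring_nf
end
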